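/- arXiv:1304.0781 — 2 statements merged into one kernel-verified Lean document; each statement's English description precedes it below -/
import Mathlib

section
/- If Z = x₁ + y₂·ij is a hyperbolic number (x₁, y₂ ∈ ℝ) and U = u₁ + u₂j is any bicomplex number, then |Z·U|² = |Z|²·|U|² + 4x₁y₂·Re(i·u₁·conj(u₂)). -/
@[ext] structure BC where
  z1 : ℂ
  z2 : ℂ

namespace BC

instance : Zero BC := ⟨⟨0, 0⟩⟩
instance : One BC := ⟨⟨1, 0⟩⟩
instance : Add BC := ⟨fun Z W => ⟨Z.z1 + W.z1, Z.z2 + W.z2⟩⟩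
instance : Neg BC := ⟨fun Z => ⟨-Z.z1, -Z.z2⟩⟩
instance : Mul BC := ⟨fun Z W => ⟨Z.z1 * W.z1 - Z.z2 * W.z2, Z.z1 * W.z2 + Z.z2 * W.z1⟩⟩

@[simp] lemma zero_z1 : (0 : BC).z1 = 0 := rfl
@[simp] lemma zero_z2 : (0 : BC).z2 = 0 := rfl
@[simp] lemma one_z1 : (1 : BC).z1 = 1 := rfl
@[simp] lemma one_z2 : (1 : BC).z2 = 0 := rfl
@[simp] lemma add_z1 (Z W : BC) : (Z + W).z1 = Z.z1 + W.z1 := rfl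
@[simp] lemma add_z2 (Z W : BC) : (Z + W).z2 = Z.z2 + W.z2 := rfl
@[simp] lemma neg_z1 (Z : BC) : (-Z).z1 = -Z.z1 := rfl
@[simp] lemma neg_z2 (Z : BC) : (-Z).z2 = -Z.z2 := rfl
@[simp] lemma mul_z1 (Z W : BC) : (Z * W).z1 = Z.z1 * W.z1 - Z.z2 * W.z2 := rfl
@[simp] lemma mul_z2 (Z W : BC) : (Z * W).z2 = Z.z1 * W.z2 + Z.z2 * W.z1 := rfl

instance : CommRing BC where
  add_assoc a b c := by ext <;> simp <;> ring
  zero_add a := by ext <;> simp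
  add_zero a := by ext <;> simp
  add_comm a b := by ext <;> simp <;> ring
  neg_add_cancel a := by ext <;> simp
  mul_assoc a b c := by ext <;> simp <;> ring
  one_mul a := by ext <;> simp
  mul_one a := by ext <;> simp
  left_distrib a b c := by ext <;> simp <;> ring
  right_distrib a b c := by ext <;> simp <;> ring
  mul_comm a b := by ext <;> simp <;> ring
  zero_mul a := by ext <;> simp
  mul_zero a := by ext <;> simp
  nsmul := nsmulRec
  zsmul := zsmulRec

/-- Euclidean norm of a bicomplex number. -/
noncomputable def enorm (Z : BC) : ℝ :=
  Real.sqrt (‖Z.z1‖ ^ 2 + ‖Z.z2‖ ^ 2)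

/-- Embedding of ℂ(𝐢) into BC. -/
def ofC (z : ℂ) : BC := ⟨z, 0⟩

/-- Embedding of ℝ into BC. -/
noncomputable def ofR (r : ℝ) : BC := ⟨(r : ℂ), 0⟩

/-- The idempotent 𝐞 = (1 + 𝐢𝐣)/2. -/
noncomputable def e : BC := ⟨1 / 2, Complex.I / 2⟩

/-- The idempotent 𝐞† = (1 - 𝐢𝐣)/2. -/
noncomputable def edag : BC := ⟨1 / 2, -(Complex.I / 2)⟩

/-- First idempotent component β₁ = z₁ - 𝐢 z₂. -/
def beta1 (Z : BC) : ℂ := Z.z1 - Complex.I * Z.z2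

/-- Second idempotent component β₂ = z₁ + 𝐢 z₂. -/
def beta2 (Z : BC) : ℂ := Z.z1 + Complex.I * Z.z2

/-- The †-conjugation. -/
def dag (Z : BC) : BC := ⟨Z.z1, -Z.z2⟩

/-- The *-conjugation. -/
def bstar (Z : BC) : BC := ⟨(starRingEnd ℂ) Z.z1, -((starRingEnd ℂ) Z.z2)⟩

/-- The set 𝔻⁺ of positive hyperbolic numbers. -/
def Dpos : Set BC :=
  {Z | ∃ ν μ : ℝ, 0 ≤ ν ∧ 0 ≤ μ ∧ Z = ofR ν * e + ofR μ * edag}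

/-- Partial order induced by 𝔻⁺. -/
def hle (Z W : BC) : Prop := W - Z ∈ Dpos

/-- Hyperbolic-valued norm |Z|ₖ = |β₁|𝐞 + |β₂|𝐞†. -/
noncomputable def hnorm (Z : BC) : BC :=
  ofR ‖beta1 Z‖ * e + ofR ‖beta2 Z‖ * edag

/-- Z is a hyperbolic number: Z = x₁ + y₂ 𝐢𝐣. -/
def isHyp (Z : BC) : Prop := Z.z1.im = 0 ∧ Z.z2.re = 0


lemma enorm_sq (Z : BC) : enorm Z ^ 2 = ‖Z.z1‖ ^ 2 + ‖Z.z2‖ ^ 2 :=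
  Real.sq_sqrt (by positivity)

lemma enorm_mul_sq (Z W : BC) :
    enorm (Z * W) ^ 2 = enorm Z ^ 2 * enorm W ^ 2 +
      4 * (Z.z1 * (starRingEnd ℂ) Z.z2).im * (W.z1 * (starRingEnd ℂ) W.z2).im := by
  simp only [enorm_sq, mul_z1, mul_z2, Complex.sq_norm, Complex.normSq_apply, Complex.sub_re,
    Complex.sub_im, Complex.add_re, Complex.add_im, Complex.mul_re, Complex.mul_im,
    Complex.conj_re, Complex.conj_im]
  ring

theorem euclidean_norm_mul_of_hyperbolic (x₁ y₂ : ℝ) (U : BC) :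
    enorm ((⟨(x₁ : ℂ), (y₂ : ℂ) * Complex.I⟩ : BC) * U) ^ 2 =
      enorm (⟨(x₁ : ℂ), (y₂ : ℂ) * Complex.I⟩ : BC) ^ 2 * enorm U ^ 2 +
        4 * x₁ * y₂ * (Complex.I * U.z1 * (starRingEnd ℂ) U.z2).re := by
  have hZ : ((x₁ : ℂ) * (starRingEnd ℂ) ((y₂ : ℂ) * Complex.I)).im = -(x₁ * y₂) := by simp
  have hU :
      (Complex.I * U.z1 * (starRingEnd ℂ) U.z2).re = -(U.z1 * (starRingEnd ℂ) U.z2).im := by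
    rw [mul_assoc, Complex.I_mul_re]
  rw [enorm_mul_sq, hZ, hU]
  ring

end BC
end

section
/- Let A = A₁ + jA₂ = 𝒜₁e + 𝒜₂e† be a bicomplex n×n matrix that is *-self-adjoint. Then the following are equivalent: (a) c^{*t}·A·c ∈ 𝔻⁺ for every column c ∈ BC^n (A is hyperbolic positive); (b) both complex matrices 𝒜₁ = A₁ - iA₂ and 𝒜₂ = A₁ + iA₂ are positive semidefinite; (c) A₁ ≥ 0, A₂ is skew self-adjoint, and -A₁ ≤ iA₂ ≤ A₁. -/
namespace BC

/-- Bicomplex matrix from its idempotent components. -/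
noncomputable def idemMat {n : ℕ} (A1 A2 : Matrix (Fin n) (Fin n) ℂ) :
    Matrix (Fin n) (Fin n) BC :=
  fun i j => ofC (A1 i j) * e + ofC (A2 i j) * edag

/-- The *-conjugate transpose of a bicomplex matrix. -/
def cstar {m n : ℕ} (A : Matrix (Fin m) (Fin n) BC) : Matrix (Fin n) (Fin m) BC :=
  fun i j => bstar (A j i)

/-- The quadratic form c^{*t} · A · c. -/
def quadForm {n : ℕ} (A : Matrix (Fin n) (Fin n) BC) (c : Fin n → BC) : BC :=
  ∑ i, ∑ j, bstar (c i) * A i j * c j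

/-- A is hyperbolic positive: *-self-adjoint with c^{*t}Ac ∈ 𝔻⁺ for all columns c. -/
def HypPos {n : ℕ} (A : Matrix (Fin n) (Fin n) BC) : Prop :=
  cstar A = A ∧ ∀ c : Fin n → BC, quadForm A c ∈ Dpos

/-!
The idempotent components `beta1`, `beta2 : BC → ℂ` are surjective ring homomorphisms that turn
the *-conjugation into complex conjugation, and a bicomplex number lies in 𝔻⁺ exactly when both
components are nonnegative reals. Applying `beta k` to `c^{*t} A c` gives the Hermitian form of
`𝒜ₖ = A.map (beta k)` at `beta k ∘ c`, which gives (a) ⇔ (b). For (c), `A₁ = (𝒜₁ + 𝒜₂) / 2`,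
and `A₂ᴴ = -A₂` is the `j`-part of `A^{*t} = A`.
-/

open scoped ComplexOrder Matrix

def beta1RingHom : BC →+* ℂ where
  toFun := beta1
  map_one' := by simp [beta1]
  map_mul' Z W := by
    simp only [beta1, mul_z1, mul_z2]
    linear_combination (-(Z.z2 * W.z2)) * Complex.I_mul_I
  map_zero' := by simp [beta1]
  map_add' Z W := by simp only [beta1, add_z1, add_z2]; ring

def beta2RingHom : BC →+* ℂ where
  toFun := beta2
  map_one' := by simp [beta2]
  map_mul' Z W := by
    simp only [beta2, mul_z1, mul_z2]
    linear_combination (-(Z.z2 * W.z2)) * Complex.I_mul_I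
  map_zero' := by simp [beta2]
  map_add' Z W := by simp only [beta2, add_z1, add_z2]; ring

lemma beta1_bstar (Z : BC) : beta1 (bstar Z) = star (beta1 Z) := by
  simp [beta1, bstar, Complex.conj_I]

lemma beta2_bstar (Z : BC) : beta2 (bstar Z) = star (beta2 Z) := by
  simp [beta2, bstar, Complex.conj_I]

lemma beta1_surjective : Function.Surjective beta1 :=
  fun z => ⟨ofC z, by simp [beta1, ofC]⟩

lemma beta2_surjective : Function.Surjective beta2 :=
  fun z => ⟨ofC z, by simp [beta2, ofC]⟩

lemma mem_Dpos_iff (Z : BC) : Z ∈ Dpos ↔ 0 ≤ beta1 Z ∧ 0 ≤ beta2 Z := by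
  constructor
  · rintro ⟨ν, μ, hν, hμ, rfl⟩
    have h1 : beta1 (ofR ν * e + ofR μ * edag) = ν := by
      simp [beta1, ofR, e, edag]
      linear_combination (((μ : ℂ) - ν) / 2) * Complex.I_mul_I
    have h2 : beta2 (ofR ν * e + ofR μ * edag) = μ := by
      simp [beta2, ofR, e, edag]
      linear_combination (((ν : ℂ) - μ) / 2) * Complex.I_mul_I
    rw [h1, h2, Complex.zero_le_real, Complex.zero_le_real]
    exact ⟨hν, hμ⟩
  · rintro ⟨h1, h2⟩
    have hb1 : Z.z1 - Complex.I * Z.z2 = (beta1 Z).re := Complex.eq_re_of_ofReal_le (by simpa)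
    have hb2 : Z.z1 + Complex.I * Z.z2 = (beta2 Z).re := Complex.eq_re_of_ofReal_le (by simpa)
    refine ⟨_, _, (Complex.nonneg_iff.1 h1).1, (Complex.nonneg_iff.1 h2).1, ?_⟩
    ext
    · simp [ofR, e, edag]
      linear_combination hb1 / 2 + hb2 / 2
    · simp [ofR, e, edag]
      linear_combination (-Complex.I / 2) * (hb2 - hb1) + Z.z2 * Complex.I_mul_I

variable {m n : ℕ}

lemma map_cstar (φ : BC → ℂ) (hφ : ∀ Z, φ (bstar Z) = star (φ Z))
    (A : Matrix (Fin m) (Fin n) BC) : (cstar A).map φ = (A.map φ)ᴴ :=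
  Matrix.ext fun _ _ => hφ _

lemma map_quadForm (φ : BC →+* ℂ) (hφ : ∀ Z, φ (bstar Z) = star (φ Z))
    (A : Matrix (Fin n) (Fin n) BC) (c : Fin n → BC) :
    φ (quadForm A c) = star (φ ∘ c) ⬝ᵥ (A.map φ *ᵥ (φ ∘ c)) := by
  simp [quadForm, hφ, dotProduct, Matrix.mulVec, Finset.mul_sum, mul_assoc]

lemma forall_map_quadForm_nonneg_iff (φ : BC →+* ℂ) (hφ : ∀ Z, φ (bstar Z) = star (φ Z))
    (hsurj : Function.Surjective φ) {A : Matrix (Fin n) (Fin n) BC} (hA : cstar A = A) :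
    (∀ c, 0 ≤ φ (quadForm A c)) ↔ (A.map φ).PosSemidef := by
  have hherm : (A.map φ).IsHermitian := by
    rw [Matrix.IsHermitian, ← map_cstar φ hφ, hA]
  simp only [map_quadForm φ hφ, Matrix.posSemidef_iff_dotProduct_mulVec, hherm, true_and]
  exact (hsurj.comp_left.forall (p := fun x => 0 ≤ star x ⬝ᵥ (A.map φ *ᵥ x))).symm

lemma forall_quadForm_mem_Dpos_iff {A : Matrix (Fin n) (Fin n) BC} (hA : cstar A = A) :
    (∀ c, quadForm A c ∈ Dpos) ↔ (A.map beta1).PosSemidef ∧ (A.map beta2).PosSemidef := by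
  simp only [mem_Dpos_iff, forall_and]
  exact and_congr
    (forall_map_quadForm_nonneg_iff beta1RingHom beta1_bstar beta1_surjective hA)
    (forall_map_quadForm_nonneg_iff beta2RingHom beta2_bstar beta2_surjective hA)

lemma cstar_eq_self_iff (A : Matrix (Fin n) (Fin n) BC) :
    cstar A = A ↔ (A.map z1)ᴴ = A.map z1 ∧ (A.map z2)ᴴ = -A.map z2 := by
  simp only [← Matrix.ext_iff, cstar, bstar, BC.ext_iff, forall_and, Matrix.conjTranspose_apply,
    Matrix.map_apply, Matrix.neg_apply, Complex.star_def, neg_eq_iff_eq_neg]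

lemma _root_.Matrix.PosSemidef.of_sub_of_add {ι 𝕜 : Type*} [Fintype ι] [RCLike 𝕜]
    {M N : Matrix ι ι 𝕜} (hsub : (M - N).PosSemidef) (hadd : (M + N).PosSemidef) :
    M.PosSemidef := by
  have hM : M = (2⁻¹ : ℝ) • ((M - N) + (M + N)) := by
    rw [sub_add_add_cancel, ← two_smul ℝ M, smul_smul]; norm_num
  rw [hM]
  exact (hsub.add hadd).smul (by norm_num)

open scoped ComplexOrder in
theorem hyperbolic_positive_tfae (n : ℕ) (A1 A2 : Matrix (Fin n) (Fin n) ℂ)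
    (A : Matrix (Fin n) (Fin n) BC)
    (hA : A = fun i j => (⟨A1 i j, A2 i j⟩ : BC))
    (hsa : cstar A = A) :
    ((∀ c : Fin n → BC, quadForm A c ∈ Dpos) ↔
      (Matrix.PosSemidef (A1 - Complex.I • A2) ∧
        Matrix.PosSemidef (A1 + Complex.I • A2))) ∧
    ((∀ c : Fin n → BC, quadForm A c ∈ Dpos) ↔
      (Matrix.PosSemidef A1 ∧ A2.conjTranspose = -A2 ∧
        Matrix.PosSemidef (A1 + Complex.I • A2) ∧
        Matrix.PosSemidef (A1 - Complex.I • A2))) := by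
  subst hA
  have hskew : A2ᴴ = -A2 := ((cstar_eq_self_iff _).1 hsa).2
  have hpsd := forall_quadForm_mem_Dpos_iff hsa
  change _ ↔ (A1 - Complex.I • A2).PosSemidef ∧ (A1 + Complex.I • A2).PosSemidef at hpsd
  refine ⟨hpsd, hpsd.trans ⟨fun ⟨h₁, h₂⟩ => ⟨h₁.of_sub_of_add h₂, hskew, h₂, h₁⟩,
    fun ⟨_, _, h₂, h₁⟩ => ⟨h₁, h₂⟩⟩⟩

end BC
end
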